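/- Fix integers m ≥ 3 and n ≥ 1, and define the escalation data E(k), U(k), A(k), NU(k) as in the context. Then for every k ≥ 1 and every nondecreasing k-tuple a of positive integers, the m-gonal form given by a is new tight T(n)-universal if and only if a ∈ NU(k). -/

import Mathlib

/-- `s` is a generalized `m`-gonal number, i.e. `s = ((m-2)u^2 - (m-4)u)/2` for some `u ∈ ℤ`. -/
def IsGP (m s : ℤ) : Prop := ∃ u : ℤ, 2 * s = (m - 2) * u ^ 2 - (m - 4) * u

/-- `R'(a)`: the set of nonzero integers represented by the `m`-gonal form with
coefficient sequence `a`, i.e. expressible as `a₁s₁ + ⋯ + aₖsₖ` with each `sᵢ ∈ GP_m`. -/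
def Rset (m : ℤ) (a : List ℤ) : Set ℤ :=
  {x | x ≠ 0 ∧ ∃ s : List ℤ, s.length = a.length ∧ (∀ y ∈ s, IsGP m y) ∧
      x = (List.zipWith (· * ·) a s).sum}

/-- One escalation step: from a set `S` of (sorted) coefficient tuples, form all tuples
`a * g` where `a ∈ S` is non-universal with `ψ(a)` the least element of `T(n) \ R'(a)`
and `g ∈ ℰ(a) = {g : n ≤ g ≤ ψ(a) - n} ∪ {ψ(a)}`. -/
def escStep (m n : ℤ) (S : Set (List ℤ)) : Set (List ℤ) :=
  {l | ∃ a ∈ S, ∃ ψ : ℤ, IsLeast (Set.Ici n \ Rset m a) ψ ∧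
        ∃ g : ℤ, ((n ≤ g ∧ g ≤ ψ - n) ∨ g = ψ) ∧ l = List.orderedInsert (· ≤ ·) g a}

/-- The escalation sets `E(k)` (with `E(0) = ∅` for convenience): `E(1) = {(n)}` and
`E(k+1)` is obtained by escalating the non-universal members of `E(k)`. -/
def Eset (m n : ℤ) : ℕ → Set (List ℤ)
  | 0 => ∅
  | 1 => {[n]}
  | (k + 2) => escStep m n (Eset m n (k + 1))

/-- `U(k)`: the members of `E(k)` which are tight `T(n)`-universal (`ψ(a) = ∞`,
i.e. `T(n) ⊆ R'(a)`). -/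
def Uset (m n : ℤ) (k : ℕ) : Set (List ℤ) :=
  {a ∈ Eset m n k | Set.Ici n ⊆ Rset m a}

/-- `A(k) = E(k) \ U(k)`. -/
def Aset (m n : ℤ) (k : ℕ) : Set (List ℤ) := Eset m n k \ Uset m n k

/-- `NU(k)`: the members `a` of `U(k)` such that no proper (sorted) subsequence of `a`
belongs to `U(i)` for some `i < k`. -/
def NUset (m n : ℤ) (k : ℕ) : Set (List ℤ) :=
  {a ∈ Uset m n k | ∀ b : List ℤ, List.Sublist b a → b ≠ a → ∀ i, i < k → b ∉ Uset m n i}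

/-!
Every nonzero value of a form whose coefficients are all `≥ n ≥ 1` is either one of the
coefficients or at least `n` more than one of them. Hence, if `c` is a sublist of a sorted
`T(n)`-universal tuple `b` and `ψ = ψ(c)`, splitting a representation of `ψ` by `b`
into its `c`-part and the rest produces a coefficient `g` of `b` outside `c` with `g ∈ ℰ(c)`.
Starting from `(n)`, which is a sublist of every such `b`, the escalation can therefore be run
inside `b` until it reaches a universal sublist of `b`. This gives both directions: a new tight
universal tuple must be that sublist itself, and a member of `NU(k)` cannot have a proper
universal sublist, since that sublist would contain a universal member of an earlier `U(i)`.
-/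

open scoped Pointwise

lemma isGP_zero (m : ℤ) : IsGP m 0 := ⟨0, by ring⟩

lemma isGP_one (m : ℤ) : IsGP m 1 := ⟨1, by ring⟩

lemma IsGP.nonneg {m s : ℤ} (hm : 3 ≤ m) (h : IsGP m s) : 0 ≤ s := by
  obtain ⟨u, hu⟩ := h
  -- `2 s = (m - 3) u (u - 1) + u (u + 1)`, and `u (u ± 1) ≥ 0` for integers `u`
  have h₁ : 0 ≤ u * (u - 1) := by rcases le_or_gt u 0 with h | h <;> nlinarith
  have h₂ : 0 ≤ u * (u + 1) := by rcases le_or_gt u 0 with h | h <;> nlinarith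
  nlinarith [mul_nonneg (sub_nonneg.2 hm) h₁]

def formValues (m : ℤ) (a : List ℤ) : Set ℤ :=
  (a.map fun c => (c * ·) '' {s | IsGP m s}).sum

section formValues

variable {m : ℤ}

lemma formValues_nil : formValues m [] = {0} := rfl

lemma formValues_cons (c : ℤ) (a : List ℤ) :
    formValues m (c :: a) = (c * ·) '' {s | IsGP m s} + formValues m a := rfl

lemma formValues_append (a b : List ℤ) :
    formValues m (a ++ b) = formValues m a + formValues m b := by
  simp only [formValues, List.map_append, List.sum_append]

lemma List.Perm.formValues_eq {a b : List ℤ} (h : a.Perm b) : formValues m a = formValues m b :=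
  (h.map _).sum_eq

lemma zero_mem_formValues (a : List ℤ) : (0 : ℤ) ∈ formValues m a :=
  List.sum_induction (0 ∈ ·) (fun _ _ hs ht => ⟨0, hs, 0, ht, add_zero 0⟩) rfl fun _ hS => by
    obtain ⟨c, -, rfl⟩ := List.mem_map.1 hS
    exact ⟨0, isGP_zero m, mul_zero c⟩

lemma List.Sublist.formValues_subset {a b : List ℤ} (h : a.Sublist b) :
    formValues m a ⊆ formValues m b := by
  obtain ⟨d, hd⟩ := h.exists_perm_append
  rw [hd.formValues_eq, formValues_append]
  exact Set.subset_add_left _ (zero_mem_formValues d)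

lemma mem_formValues_of_mem {a : List ℤ} {c : ℤ} (h : c ∈ a) : c ∈ formValues m a :=
  (List.singleton_sublist.2 h).formValues_subset
    ⟨c, ⟨1, isGP_one m, mul_one c⟩, 0, rfl, add_zero c⟩

lemma mem_formValues_iff {a : List ℤ} {x : ℤ} :
    x ∈ formValues m a ↔ ∃ s : List ℤ, s.length = a.length ∧ (∀ y ∈ s, IsGP m y) ∧
      x = (List.zipWith (· * ·) a s).sum := by
  induction a generalizing x with
  | nil => simp [formValues_nil]
  | cons c a ih =>
    rw [formValues_cons, Set.mem_add]
    constructor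
    · rintro ⟨_, ⟨s, hs, rfl⟩, y, hy, rfl⟩
      obtain ⟨t, hlen, hgp, rfl⟩ := ih.1 hy
      exact ⟨s :: t, by simp [hlen], by simpa using ⟨hs, hgp⟩, by simp⟩
    · rintro ⟨_ | ⟨s, t⟩, hlen, hgp, rfl⟩
      · simp at hlen
      · exact ⟨c * s, ⟨s, hgp s (by simp), rfl⟩, _,
          ih.2 ⟨t, by simpa using hlen, fun y hy => hgp y (by simp [hy]), rfl⟩, by simp⟩

lemma mem_Rset_iff {a : List ℤ} {x : ℤ} : x ∈ Rset m a ↔ x ≠ 0 ∧ x ∈ formValues m a :=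
  and_congr_right fun _ => mem_formValues_iff.symm

lemma List.Sublist.Rset_subset {a b : List ℤ} (h : a.Sublist b) : Rset m a ⊆ Rset m b :=
  fun _ hx => mem_Rset_iff.2 ⟨(mem_Rset_iff.1 hx).1, h.formValues_subset (mem_Rset_iff.1 hx).2⟩

lemma exists_eq_or_add_le_of_mem_formValues (hm : 3 ≤ m) {n : ℤ} (hn : 0 ≤ n) {a : List ℤ}
    (ha : ∀ c ∈ a, n ≤ c) {x : ℤ} (hx : x ∈ formValues m a) (hx0 : x ≠ 0) :
    ∃ c ∈ a, x = c ∨ c + n ≤ x := by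
  suffices ∀ x ∈ formValues m a, x = 0 ∨ ∃ c ∈ a, x = c ∨ c + n ≤ x from
    (this x hx).resolve_left hx0
  refine List.sum_induction (fun S : Set ℤ => ∀ x ∈ S, x = 0 ∨ ∃ c ∈ a, x = c ∨ c + n ≤ x)
    ?_ (fun _ h => Or.inl h) ?_
  · intro S T hS hT x hx
    obtain ⟨s, hs, t, ht, rfl⟩ := Set.mem_add.1 hx
    rcases hS s hs with rfl | ⟨c, hc, hsc⟩
    · simpa using hT t ht
    rcases hT t ht with rfl | ⟨d, hd, htd⟩
    · simpa using Or.inr ⟨c, hc, hsc⟩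
    have : n ≤ t := by have := ha d hd; omega
    exact Or.inr ⟨c, hc, Or.inr (by omega)⟩
  · simp only [List.mem_map, forall_exists_index, and_imp]
    rintro _ c hc rfl _ ⟨s, hs, rfl⟩
    have hcn := ha c hc
    rcases (hs.nonneg hm).eq_or_lt with rfl | hs1
    · simp
    rcases (show (1 : ℤ) ≤ s by omega).eq_or_lt with rfl | hs2
    · simpa using Or.inr ⟨c, hc, Or.inl rfl⟩
    exact Or.inr ⟨c, hc, Or.inr (by nlinarith)⟩

lemma le_of_mem_formValues (hm : 3 ≤ m) {n : ℤ} (hn : 0 ≤ n) {a : List ℤ}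
    (ha : ∀ c ∈ a, n ≤ c) {x : ℤ} (hx : x ∈ formValues m a) (hx0 : x ≠ 0) : n ≤ x := by
  obtain ⟨c, hc, hxc⟩ := exists_eq_or_add_le_of_mem_formValues hm hn ha hx hx0
  have := ha c hc
  omega

lemma Rset_subset_Ici (hm : 3 ≤ m) {n : ℤ} (hn : 0 ≤ n) {a : List ℤ} (ha : ∀ c ∈ a, n ≤ c) :
    Rset m a ⊆ Set.Ici n :=
  fun _ hx => le_of_mem_formValues hm hn ha (mem_Rset_iff.1 hx).2 (mem_Rset_iff.1 hx).1

lemma mem_of_Ici_subset_Rset (hm : 3 ≤ m) {n : ℤ} (hn : 0 < n) {a : List ℤ}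
    (ha : ∀ c ∈ a, n ≤ c) (h : Set.Ici n ⊆ Rset m a) : n ∈ a := by
  obtain ⟨hn0, hna⟩ := mem_Rset_iff.1 (h Set.self_mem_Ici)
  obtain ⟨c, hc, rfl | hcn⟩ := exists_eq_or_add_le_of_mem_formValues hm hn.le ha hna hn0
  · exact hc
  · have := ha c hc
    omega

lemma exists_escalator_cons_subperm (hm : 3 ≤ m) {n : ℤ} (hn : 0 ≤ n) {b c : List ℤ}
    (hcb : c.Sublist b) (hb : ∀ x ∈ b, n ≤ x) {ψ : ℤ} (hψb : ψ ∈ formValues m b)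
    (hψc : ψ ∉ formValues m c) :
    ∃ g, ((n ≤ g ∧ g ≤ ψ - n) ∨ g = ψ) ∧ (g :: c).Subperm b := by
  obtain ⟨d, hd⟩ := hcb.exists_perm_append
  have hdn : ∀ x ∈ d, n ≤ x := fun x hx => hb x (hd.mem_iff.2 (List.mem_append_right c hx))
  have hcn : ∀ x ∈ c, n ≤ x := fun x hx => hb x (hcb.subset hx)
  rw [hd.formValues_eq, formValues_append, Set.mem_add] at hψb
  obtain ⟨r, hr, t, ht, rfl⟩ := hψb
  have ht0 : t ≠ 0 := by
    rintro rfl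
    exact hψc (by simpa using hr)
  obtain ⟨g, hg, hgt⟩ := exists_eq_or_add_le_of_mem_formValues hm hn hdn ht ht0
  have hsub : (g :: c).Subperm b :=
    ((List.singleton_sublist.2 hg).append (List.Sublist.refl c)).subperm.trans
      (List.perm_append_comm.trans hd.symm).subperm
  refine ⟨g, ?_, hsub⟩
  have hgn := hdn g hg
  rcases eq_or_ne r 0 with rfl | hr0
  · rcases hgt with rfl | hgt
    · exact Or.inr (zero_add t).symm
    · exact Or.inl ⟨hgn, by omega⟩
  · have hrn := le_of_mem_formValues hm hn hcn hr hr0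
    exact Or.inl ⟨hgn, by omega⟩

end formValues

section escalation

variable {m n : ℤ}

lemma Eset_succ {k : ℕ} (hk : 1 ≤ k) : Eset m n (k + 1) = escStep m n (Eset m n k) := by
  obtain ⟨k, rfl⟩ := Nat.exists_eq_add_of_le' hk
  rfl

lemma le_of_mem_Eset : ∀ {k : ℕ} {a : List ℤ}, a ∈ Eset m n k → ∀ x ∈ a, n ≤ x
  | 1, _, rfl, x, hx => (List.mem_singleton.1 hx).ge
  | _ + 2, _, ⟨_, hc, _, hψ, g, hg, rfl⟩, x, hx => by
    rcases (List.mem_orderedInsert _).1 hx with rfl | hx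
    · rcases hg with ⟨hg, -⟩ | rfl
      exacts [hg, hψ.1.1]
    · exact le_of_mem_Eset hc x hx

variable (hm : 3 ≤ m) (hn : 0 < n) {b : List ℤ} (hb : b.Pairwise (· ≤ ·))
  (hbn : ∀ x ∈ b, n ≤ x) (hbU : Set.Ici n ⊆ Rset m b)
include hm hn hb hbn hbU

lemma exists_sublist_mem_Eset_succ {c : List ℤ} {j : ℕ} (hj : 1 ≤ j) (hcb : c.Sublist b)
    (hcE : c ∈ Eset m n j) (hcU : ¬ Set.Ici n ⊆ Rset m c) :
    ∃ c' : List ℤ, c'.Sublist b ∧ c'.length = c.length + 1 ∧ c' ∈ Eset m n (j + 1) := by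
  obtain ⟨ψ, hψ, hψmin⟩ := Int.exists_least_of_bdd ⟨n, fun z hz => hz.1⟩
    (Set.not_subset.1 hcU)
  have hψ0 : ψ ≠ 0 := by have : n ≤ ψ := hψ.1; omega
  have hψc : ψ ∉ formValues m c := fun h => hψ.2 (mem_Rset_iff.2 ⟨hψ0, h⟩)
  obtain ⟨g, hg, hsub⟩ := exists_escalator_cons_subperm hm hn.le hcb hbn
    (mem_Rset_iff.1 (hbU hψ.1)).2 hψc
  refine ⟨c.orderedInsert (· ≤ ·) g, ?_, List.orderedInsert_length _ _ _, ?_⟩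
  · exact List.sublist_of_subperm_of_pairwise ((List.perm_orderedInsert _ g c).subperm.trans hsub)
      ((hb.sublist hcb).orderedInsert g c) hb
  · rw [Eset_succ hj]
    exact ⟨c, hcE, ψ, ⟨hψ, hψmin⟩, g, hg, rfl⟩

lemma exists_sublist_mem_Uset_or_mem_Eset (j : ℕ) (hj : 1 ≤ j) (hjb : j ≤ b.length) :
    (∃ c : List ℤ, c.Sublist b ∧ c ∈ Uset m n c.length) ∨
      ∃ c : List ℤ, c.Sublist b ∧ c.length = j ∧ c ∈ Eset m n j := by
  induction j, hj using Nat.le_induction with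
  | base =>
    exact Or.inr ⟨[n], List.singleton_sublist.2 (mem_of_Ici_subset_Rset hm hn hbn hbU), rfl, rfl⟩
  | succ j hj ih =>
    obtain hU | ⟨c, hcb, rfl, hcE⟩ := ih (by omega)
    · exact Or.inl hU
    by_cases hcU : Set.Ici n ⊆ Rset m c
    · exact Or.inl ⟨c, hcb, hcE, hcU⟩
    obtain ⟨c', hc'b, hlen, hc'E⟩ := exists_sublist_mem_Eset_succ hm hn hb hbn hbU hj hcb hcE hcU
    exact Or.inr ⟨c', hc'b, hlen, hc'E⟩

lemma exists_sublist_mem_Uset : ∃ c : List ℤ, c.Sublist b ∧ c ∈ Uset m n c.length := by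
  have hb1 : 1 ≤ b.length := List.length_pos_of_mem (mem_of_Ici_subset_Rset hm hn hbn hbU)
  obtain hU | ⟨c, hcb, hlen, hcE⟩ :=
    exists_sublist_mem_Uset_or_mem_Eset hm hn hb hbn hbU b.length hb1 le_rfl
  · exact hU
  · obtain rfl := hcb.eq_of_length hlen
    exact ⟨c, hcb, hcE, hbU⟩

end escalation

theorem new_tight_universal_iff_general (m n : ℤ) (hm : 3 ≤ m) (hn : 1 ≤ n)
    (k : ℕ) (a : List ℤ) (hlen : a.length = k)
    (hsort : a.Pairwise (· ≤ ·)) (hpos : ∀ x ∈ a, 0 < x) :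
    (Rset m a = Set.Ici n ∧
        ∀ b : List ℤ, List.Sublist b a → b ≠ a → Rset m b ⊂ Set.Ici n) ↔
      a ∈ NUset m n k := by
  constructor
  · rintro ⟨hRa, hproper⟩
    have han : ∀ x ∈ a, n ≤ x := fun x hx =>
      hRa.le (mem_Rset_iff.2 ⟨(hpos x hx).ne', mem_formValues_of_mem hx⟩)
    obtain ⟨c, hca, hcU⟩ := exists_sublist_mem_Uset hm hn hsort han hRa.ge
    obtain rfl : c = a := by
      by_contra hne
      exact (hproper c hca hne).not_subset hcU.2
    exact ⟨hlen ▸ hcU, fun b hba hne _ _ hbU => (hproper b hba hne).not_subset hbU.2⟩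
  · rintro ⟨⟨haE, haU⟩, hnew⟩
    have hRa : Rset m a = Set.Ici n :=
      (Rset_subset_Ici hm (by omega) (le_of_mem_Eset haE)).antisymm haU
    refine ⟨hRa, fun b hba hne => (hRa ▸ hba.Rset_subset).ssubset_of_ne fun hRb => ?_⟩
    obtain ⟨c, hcb, hcU⟩ := exists_sublist_mem_Uset hm hn (hsort.sublist hba)
      (fun x hx => le_of_mem_Eset haE x (hba.subset hx)) hRb.ge
    have hca : c.length < k :=
      hlen ▸ hcb.length_le.trans_lt (hba.length_le.lt_of_ne fun h => hne (hba.eq_of_length h))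
    exact hnew c (hcb.trans hba) (by rintro rfl; omega) c.length hca hcU

/-- A nondecreasing tuple `a` of positive integers of length `k ≥ 1` is new tight
`T(n)`-universal (i.e. `R'(a) = T(n)` and `R'(b) ⊊ T(n)` for every proper subsequence
`b` of `a`) if and only if `a ∈ NU(k)`. -/
theorem new_tight_universal_iff (m n : ℤ) (hm : 3 ≤ m) (hn : 1 ≤ n)
    (k : ℕ) (hk : 1 ≤ k) (a : List ℤ) (hlen : a.length = k)
    (hsort : a.Pairwise (· ≤ ·)) (hpos : ∀ x ∈ a, 0 < x) :
    (Rset m a = Set.Ici n ∧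
        ∀ b : List ℤ, List.Sublist b a → b ≠ a → Rset m b ⊂ Set.Ici n) ↔
      a ∈ NUset m n k :=
  new_tight_universal_iff_general m n hm hn k a hlen hsort hpos
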